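/- (Embedding a colored star forest into a jumbled family) Let 0 < c < 1, D ≥ 3, and 𝒢 = {G_1,...,G_t} a family of (p,β)-jumbled graphs on vertex set V. Let Δ ≤ (1−c)p|V| be a positive integer, s = 2t^{1/2}βp^{-1}, and ℱ a [t]-edge-colored star forest with Δ(ℱ) ≤ Δ and |V(ℱ)| + 5sD < c|V|/2. Then there is V' ⊆ V with |V'| ≥ |V| − s and a (2s,D)-good embedding of ℱ into 𝒢 restricted to V'. -/

import Mathlib

open Finset
open scoped Classical

noncomputable section

/-- Number of ordered adjacent pairs between `X` and `Y` in the graph `G`. -/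
def epairs {V : Type*} (G : SimpleGraph V) (X Y : Finset V) : ℕ :=
  ((X ×ˢ Y).filter fun p => G.Adj p.1 p.2).card

/-- `G` is `(p,β)`-jumbled. -/
def IsJumbled {V : Type*} (G : SimpleGraph V) (p β : ℝ) : Prop :=
  ∀ X Y : Finset V,
    |(epairs G X Y : ℝ) - p * X.card * Y.card| ≤ β * Real.sqrt (X.card * Y.card)

/-- `G` is `s`-joined. -/
def IsJoined {V : Type*} (G : SimpleGraph V) (s : ℕ) : Prop :=
  ∀ X Y : Finset V, s ≤ X.card → s ≤ Y.card → 0 < epairs G X Y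

/-- Ordered adjacent pairs between `X ⊆ V × [t]` and `Y ⊆ V` in the auxiliary
bipartite graph of the family `𝒢`. -/
def famPairs {V : Type*} {t : ℕ} (𝒢 : Fin t → SimpleGraph V)
    (X : Finset (V × Fin t)) (Y : Finset V) : ℕ :=
  ((X ×ˢ Y).filter fun p => (𝒢 p.1.2).Adj p.1.1 p.2).card

/-- The family `𝒢` is `(p,β)`-jumbled (its auxiliary bipartite graph is bijumbled). -/
def FamJumbled {V : Type*} {t : ℕ} (𝒢 : Fin t → SimpleGraph V) (p β : ℝ) : Prop :=
  ∀ (X : Finset (V × Fin t)) (Y : Finset V),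
    |(famPairs 𝒢 X Y : ℝ) - p * X.card * Y.card| ≤ β * Real.sqrt (X.card * Y.card)

/-- The family `𝒢` is `s`-joined (its auxiliary bipartite graph is bijoined). -/
def FamJoined {V : Type*} {t : ℕ} (𝒢 : Fin t → SimpleGraph V) (s : ℕ) : Prop :=
  ∀ (X : Finset (V × Fin t)) (Y : Finset V), s ≤ X.card → s ≤ Y.card →
    0 < famPairs 𝒢 X Y

/-- `Γ_𝒢(X)`: the family neighbourhood of `X ⊆ V × [t]`. -/
def famNbhd {V : Type*} [Fintype V] {t : ℕ} (𝒢 : Fin t → SimpleGraph V)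
    (X : Finset (V × Fin t)) : Finset V :=
  univ.filter fun v => ∃ p ∈ X, (𝒢 p.2).Adj p.1 v

/-- A `[t]`-edge-coloured rooted graph: colour classes `graph i`, a set of roots,
and for each non-root vertex a parent joined to it by an edge of colour `parentColor`. -/
structure ColoredRootedGraph (A : Type*) (t : ℕ) where
  graph : Fin t → SimpleGraph A
  isRoot : A → Bool
  parent : A → A
  parentColor : A → Fin t
  parent_adj : ∀ a, isRoot a = false → (graph (parentColor a)).Adj a (parent a)

/-- The degree of `a` in colour `i` within the vertex subset `S`. -/
def monDegOn {A : Type*} {t : ℕ} (H : Fin t → SimpleGraph A)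
    (S : Finset A) (a : A) (i : Fin t) : ℕ :=
  (S.filter fun b => (H i).Adj a b).card

/-- `φ` is an embedding of the colour classes `H` into the family `𝒢`. -/
def IsColEmbedding {A V : Type*} {t : ℕ} (𝒢 : Fin t → SimpleGraph V)
    (H : Fin t → SimpleGraph A) (φ : A → V) : Prop :=
  Function.Injective φ ∧ ∀ i a b, (H i).Adj a b → (𝒢 i).Adj (φ a) (φ b)

/-- `P_φ(ℋ)` relative to the vertex subset `S`: pairs `(φ h, i)` with `h ∈ S` a
non-root vertex and `i` the colour of the edge from `h` to its parent. -/
def Pset {A V : Type*} {t : ℕ} (ℋ : ColoredRootedGraph A t)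
    (S : Finset A) (φ : A → V) : Finset (V × Fin t) :=
  (S.filter fun a => ℋ.isRoot a = false).image fun a => (φ a, ℋ.parentColor a)

/-- The quantity `R(X,φ)` for the embedding `φ` of the part of `ℋ` induced on `S`
into the family `𝒢` restricted to `V'`. -/
def Rfun {A V : Type*} [Fintype V] {t : ℕ} (𝒢 : Fin t → SimpleGraph V)
    (V' : Finset V) (ℋ : ColoredRootedGraph A t) (S : Finset A) (φ : A → V) (D : ℕ)
    (X : Finset (V × Fin t)) : ℤ :=
  (((famNbhd 𝒢 X ∩ V')) \ (S.image φ)).card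
    - ∑ p ∈ X, ((D : ℤ) - ∑ a ∈ S.filter (fun a => φ a = p.1), (monDegOn ℋ.graph S a p.2 : ℤ))
    - ((Pset ℋ S φ) ∩ X).card

/-- `φ` is an `(s,D)`-good embedding (of the part of `ℋ` on `S`, into `𝒢` restricted
to `V'`): `R(X,φ) ≥ 0` for every `X ⊆ V' × [t]` with `|X| ≤ s`. -/
def IsGood {A V : Type*} [Fintype V] {t : ℕ} (𝒢 : Fin t → SimpleGraph V)
    (V' : Finset V) (ℋ : ColoredRootedGraph A t) (S : Finset A) (φ : A → V)
    (s : ℝ) (D : ℕ) : Prop :=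
  ∀ X : Finset (V × Fin t), (∀ p ∈ X, p.1 ∈ V') → (X.card : ℝ) ≤ s →
    0 ≤ Rfun 𝒢 V' ℋ S φ D X

end

/-!
Fix a reservoir `W₀` of about `(3D + 13/4)s` vertices, and let `R` be the set of first
coordinates of a largest `X ⊆ V × [t]` with `|X| ≤ s` having at most `D|X|` neighbours in `W₀`
outside its own first coordinates. Every `X ⊆ (V \ R) × [t]` with `|X| ≤ 2s` then has at least
`D|X|` neighbours in `W₀ \ R`: otherwise adding it would give a set of size between `s` and `3s`
with few neighbours in `W₀`, which jumbledness forbids.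

The star forest is embedded star by star outside `R ∪ W₀`. Jumbledness provides an image of the
root with more free neighbours than the star has leaves in every colour, and the leaves are
placed greedily among these. As the reservoir stays unused, `R(X, φ) ≥ |Γ(X) ∩ (W₀ \ R)| - D|X|
≥ 0`, since each pair of `P_φ ∩ X` is paid for by the parent edge of its leaf.
-/

namespace ColoredRootedGraph

variable {A : Type*} {t : ℕ} {ℱ : ColoredRootedGraph A t}

lemma isRoot_parent
    (hedge : ∀ i a b, (ℱ.graph i).Adj a b →
      (ℱ.isRoot a = true ∧ ℱ.isRoot b = false) ∨ (ℱ.isRoot a = false ∧ ℱ.isRoot b = true))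
    {a : A} (ha : ℱ.isRoot a = false) : ℱ.isRoot (ℱ.parent a) = true := by
  rcases hedge _ _ _ (ℱ.parent_adj a ha) with ⟨h, -⟩ | ⟨-, h⟩
  · simp [ha] at h
  · exact h

variable [Fintype A]

variable (ℱ) in
noncomputable def leavesOf (b : A) : Finset A :=
  univ.filter fun a => ℱ.isRoot a = false ∧ ℱ.parent a = b

variable (ℱ) in
noncomputable def starsOver (R : Finset A) : Finset A :=
  R ∪ R.biUnion ℱ.leavesOf

lemma mem_leavesOf {a b : A} : a ∈ ℱ.leavesOf b ↔ ℱ.isRoot a = false ∧ ℱ.parent a = b := by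
  simp [leavesOf]

lemma mem_starsOver {R : Finset A} {a : A} :
    a ∈ ℱ.starsOver R ↔ a ∈ R ∨ (ℱ.isRoot a = false ∧ ℱ.parent a ∈ R) := by
  simp [starsOver, mem_leavesOf, and_comm]

lemma starsOver_insert (R : Finset A) (b : A) :
    ℱ.starsOver (insert b R) = (ℱ.starsOver R ∪ {b}) ∪ ℱ.leavesOf b := by
  ext a
  simp only [mem_starsOver, mem_leavesOf, mem_union, mem_insert, mem_singleton]
  tauto

lemma starsOver_roots (hpar : ∀ a, ℱ.isRoot a = false → ℱ.isRoot (ℱ.parent a) = true) :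
    ℱ.starsOver (univ.filter fun b => ℱ.isRoot b = true) = univ := by
  ext a
  cases h : ℱ.isRoot a <;> simp [mem_starsOver, h, hpar]

lemma card_leavesOf_le (b : A) :
    (ℱ.leavesOf b).card ≤ ∑ i, monDegOn ℱ.graph univ b i := by
  have hsub : ℱ.leavesOf b ⊆ univ.biUnion fun i => univ.filter fun x => (ℱ.graph i).Adj b x := by
    intro ℓ hℓ
    obtain ⟨hleaf, rfl⟩ := mem_leavesOf.1 hℓ
    simpa using ⟨ℱ.parentColor ℓ, (ℱ.parent_adj ℓ hleaf).symm⟩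
  exact (card_le_card hsub).trans card_biUnion_le

/-- A leaf has exactly one pair `(colour, neighbour)`. -/
lemma parent_eq_of_adj (hleaf : ∀ a, ℱ.isRoot a = false → ∑ i, monDegOn ℱ.graph univ a i = 1)
    {a b : A} {i : Fin t} (ha : ℱ.isRoot a = false) (hab : (ℱ.graph i).Adj a b) :
    ℱ.parent a = b ∧ ℱ.parentColor a = i := by
  set N := (univ : Finset (Fin t × A)).filter fun q => (ℱ.graph q.1).Adj a q.2
  have hN : N.card = 1 := by
    rw [← hleaf a ha]
    simp only [N, monDegOn, card_filter, ← univ_product_univ, sum_product]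
  have := card_le_one.1 hN.le (ℱ.parentColor a, ℱ.parent a) (by simpa [N] using ℱ.parent_adj a ha)
    (i, b) (by simpa [N] using hab)
  simp only [Prod.mk.injEq] at this
  exact this.symm

end ColoredRootedGraph

section Jumbled

variable {V : Type*} {G : SimpleGraph V} {p β : ℝ}

lemma epairs_eq_sum_card_filter (G : SimpleGraph V) (B Z : Finset V) :
    epairs G B Z = ∑ u ∈ B, (Z.filter (G.Adj u)).card := by
  simp only [epairs, card_filter, sum_product]

lemma IsJumbled.card_mul_sq_le (hG : IsJumbled G p β) {B Z : Finset V} {d : ℝ}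
    (he : (epairs G B Z : ℝ) ≤ d * B.card) (hd : d ≤ p * Z.card) :
    B.card * (p * Z.card - d) ^ 2 ≤ β ^ 2 * Z.card := by
  set x : ℝ := (B.card : ℝ)
  set z : ℝ := (Z.card : ℝ)
  have hx : 0 ≤ x := Nat.cast_nonneg _
  have hz : 0 ≤ z := Nat.cast_nonneg _
  have hlow := (abs_le.1 (hG B Z)).1
  have hxM : x * (p * z - d) ≤ β * √(x * z) := by
    linarith [show x * (p * z - d) = p * x * z - d * x by ring]
  have hsq := pow_le_pow_left₀ (mul_nonneg hx (sub_nonneg.2 hd)) hxM 2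
  rw [mul_pow, mul_pow, Real.sq_sqrt (mul_nonneg hx hz)] at hsq
  rcases hx.eq_or_lt with h0 | hpos
  · rw [← h0, zero_mul]
    positivity
  · exact le_of_mul_le_mul_left (by linarith) hpos

lemma IsJumbled.sq_mul_card_mul_card_le (hG : IsJumbled G p β) (hp : 0 ≤ p) {X Y : Finset V}
    (h : ∀ x ∈ X, ∀ y ∈ Y, ¬G.Adj x y) : p ^ 2 * (X.card * Y.card) ≤ β ^ 2 := by
  have he : epairs G X Y = 0 := by
    simp only [epairs, card_eq_zero, filter_eq_empty_iff, mem_product]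
    exact fun q hq => h q.1 hq.1 q.2 hq.2
  have key := hG.card_mul_sq_le (B := X) (Z := Y) (d := 0) (by simp [he]) (by positivity)
  rcases (Nat.cast_nonneg Y.card : (0 : ℝ) ≤ Y.card).eq_or_lt with h0 | hpos
  · rw [← h0, mul_zero, mul_zero]
    positivity
  · exact le_of_mul_le_mul_right (by linarith) hpos

end Jumbled

section Family

variable {V : Type*} {t : ℕ} {𝒢 : Fin t → SimpleGraph V} {p β : ℝ}

lemma sq_mul_card_mul_card_le_of_forall_not_adj (hjum : ∀ i, IsJumbled (𝒢 i) p β)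
    (hp : 0 ≤ p) {X : Finset (V × Fin t)} {Y : Finset V}
    (h : ∀ q ∈ X, ∀ y ∈ Y, ¬(𝒢 q.2).Adj q.1 y) : p ^ 2 * (X.card * Y.card) ≤ t * β ^ 2 := by
  have hslice (c : Fin t) :
      p ^ 2 * ((X.filter fun q => q.2 = c).card * Y.card) ≤ β ^ 2 := by
    have hinj : Set.InjOn Prod.fst (X.filter fun q => q.2 = c : Set (V × Fin t)) := by
      intro q hq r hr hqr
      simp only [coe_filter] at hq hr
      exact Prod.ext hqr (hq.2.trans hr.2.symm)
    rw [← card_image_of_injOn hinj]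
    refine (hjum c).sq_mul_card_mul_card_le hp fun x hx y hy => ?_
    obtain ⟨q, hq, rfl⟩ := mem_image.1 hx
    obtain ⟨hqX, rfl⟩ := mem_filter.1 hq
    exact h q hqX y hy
  calc p ^ 2 * (X.card * Y.card)
      = ∑ c : Fin t, p ^ 2 * ((X.filter fun q => q.2 = c).card * Y.card) := by
        rw [card_eq_sum_card_fiberwise fun q _ => mem_univ q.2]
        push_cast
        rw [sum_mul, mul_sum]
    _ ≤ ∑ _c : Fin t, β ^ 2 := sum_le_sum fun c _ => hslice c
    _ = t * β ^ 2 := by simp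

/-- By jumbledness, fewer than `|Z|/t` vertices have at most `d` neighbours in `Z` in a fixed
colour. -/
lemma exists_lt_card_filter_adj (hjum : ∀ i, IsJumbled (𝒢 i) p β) (hβ : 0 ≤ β)
    (Z : Finset V) (d : ℕ) (h : √t * β + d < p * Z.card) :
    ∃ u ∈ Z, ∀ c, d < (Z.filter ((𝒢 c).Adj u)).card := by
  by_contra! hbad
  set M := p * Z.card - d
  have htβ : 0 ≤ √t * β := mul_nonneg (Real.sqrt_nonneg _) hβ
  set B : Fin t → Finset V := fun c => Z.filter fun u => (Z.filter ((𝒢 c).Adj u)).card ≤ d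
  have hB (c : Fin t) : (B c).card * M ^ 2 ≤ β ^ 2 * Z.card := by
    refine (hjum c).card_mul_sq_le ?_ (by linarith)
    rw [epairs_eq_sum_card_filter, mul_comm, ← nsmul_eq_mul, ← sum_const]
    push_cast
    exact sum_le_sum fun u hu => by exact_mod_cast (mem_filter.1 hu).2
  have hZB : (Z.card : ℝ) ≤ ∑ c, ((B c).card : ℝ) := by
    have hsub : Z ⊆ univ.biUnion B := fun u hu => by
      obtain ⟨c, hc⟩ := hbad u hu
      exact mem_biUnion.2 ⟨c, mem_univ c, mem_filter.2 ⟨hu, hc⟩⟩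
    exact_mod_cast (card_le_card hsub).trans card_biUnion_le
  have hZ : (0 : ℝ) < Z.card := by
    by_contra! h0
    have : (Z.card : ℝ) = 0 := le_antisymm h0 (Nat.cast_nonneg _)
    rw [this, mul_zero] at h
    linarith [(Nat.cast_nonneg d : (0 : ℝ) ≤ d)]
  have hM : t * β ^ 2 < M ^ 2 := by
    have := pow_lt_pow_left₀ (show √t * β < M by linarith) htβ two_ne_zero
    rwa [mul_pow, Real.sq_sqrt (Nat.cast_nonneg t)] at this
  have := calc
    (Z.card : ℝ) * M ^ 2 ≤ ∑ c, ((B c).card : ℝ) * M ^ 2 := by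
      rw [← sum_mul]
      exact mul_le_mul_of_nonneg_right hZB (sq_nonneg M)
    _ ≤ ∑ _c : Fin t, β ^ 2 * Z.card := sum_le_sum fun c _ => hB c
    _ = Z.card * (t * β ^ 2) := by
      rw [sum_const, card_univ, Fintype.card_fin, nsmul_eq_mul]
      ring
  nlinarith

end Family

section Removal

variable {V : Type*} [Fintype V] {t : ℕ} {𝒢 : Fin t → SimpleGraph V} {p β s : ℝ} {D : ℕ}

lemma famNbhd_union (X Y : Finset (V × Fin t)) :
    famNbhd 𝒢 (X ∪ Y) = famNbhd 𝒢 X ∪ famNbhd 𝒢 Y := by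
  ext v
  simp [famNbhd, or_and_right, exists_or]

lemma famNbhd_empty : famNbhd 𝒢 (∅ : Finset (V × Fin t)) = ∅ := by
  simp [famNbhd]

/-- Otherwise the vertices of `W₀` outside `X` and its neighbourhood have no edges to `X`, and
jumbledness leaves fewer than `s/4` of them. -/
lemma card_le_of_card_famNbhd_inter_le (hjum : ∀ i, IsJumbled (𝒢 i) p β) (hp : 0 < p)
    (hs : t * β ^ 2 ≤ (p * s / 2) ^ 2) {W₀ : Finset V} (hW₀ : (3 * D + 13 / 4) * s ≤ W₀.card)
    {X : Finset (V × Fin t)} (hX : (X.card : ℝ) ≤ 3 * s)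
    (hN : ((famNbhd 𝒢 X ∩ (W₀ \ X.image Prod.fst)).card : ℝ) ≤ D * X.card) :
    (X.card : ℝ) ≤ s := by
  by_contra! hXs
  set Y := (W₀ \ X.image Prod.fst) \ famNbhd 𝒢 X
  have hXY : p ^ 2 * (X.card * Y.card) ≤ p ^ 2 * (s ^ 2 / 4) := by
    refine (sq_mul_card_mul_card_le_of_forall_not_adj hjum hp.le fun q hq y hy hadj => ?_).trans
      (by linarith)
    exact (mem_sdiff.1 hy).2 (by simpa [famNbhd] using ⟨q.1, q.2, hq, hadj⟩)
  replace hXY := le_of_mul_le_mul_left hXY (by positivity)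
  have hcover : W₀ ⊆ X.image Prod.fst ∪ (famNbhd 𝒢 X ∩ (W₀ \ X.image Prod.fst)) ∪ Y := by
    intro v hv
    simp only [Y, mem_union, mem_inter, mem_sdiff]
    tauto
  have hW : (W₀.card : ℝ) ≤ X.card + D * X.card + Y.card := by
    have : W₀.card ≤ X.card + (famNbhd 𝒢 X ∩ (W₀ \ X.image Prod.fst)).card + Y.card :=
      (card_le_card hcover).trans <| (card_union_le _ _).trans <|
        Nat.add_le_add_right ((card_union_le _ _).trans (Nat.add_le_add_right card_image_le _)) _
    have := (Nat.cast_le (α := ℝ)).2 this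
    push_cast at this
    linarith
  nlinarith [(Nat.cast_nonneg Y.card : (0 : ℝ) ≤ Y.card), (Nat.cast_nonneg D : (0 : ℝ) ≤ D)]

lemma card_famNbhd_union_inter_le {Xa X : Finset (V × Fin t)} {W₀ : Finset V}
    (hdisj : Disjoint Xa X)
    (hXa : ((famNbhd 𝒢 Xa ∩ (W₀ \ Xa.image Prod.fst)).card : ℝ) ≤ D * Xa.card)
    (hX : ((famNbhd 𝒢 X ∩ (W₀ \ Xa.image Prod.fst)).card : ℝ) ≤ D * X.card) :
    ((famNbhd 𝒢 (Xa ∪ X) ∩ (W₀ \ (Xa ∪ X).image Prod.fst)).card : ℝ) ≤ D * (Xa ∪ X).card := by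
  have hsub : famNbhd 𝒢 (Xa ∪ X) ∩ (W₀ \ (Xa ∪ X).image Prod.fst) ⊆
      (famNbhd 𝒢 Xa ∩ (W₀ \ Xa.image Prod.fst)) ∪ (famNbhd 𝒢 X ∩ (W₀ \ Xa.image Prod.fst)) := by
    intro v
    simp only [famNbhd_union, image_union, mem_inter, mem_union, mem_sdiff]
    tauto
  have := (Nat.cast_le (α := ℝ)).2 ((card_le_card hsub).trans (card_union_le _ _))
  rw [card_union_of_disjoint hdisj]
  push_cast at this ⊢
  linarith

/-- `R` is the set of first coordinates of a largest `X` with `|X| ≤ s` and few neighbours in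
`W₀`; an `X` violating the conclusion could be added to it. -/
lemma exists_expanding_removal (hjum : ∀ i, IsJumbled (𝒢 i) p β) (hp : 0 < p) (hs0 : 0 ≤ s)
    (hs : t * β ^ 2 ≤ (p * s / 2) ^ 2) (W₀ : Finset V) (hW₀ : (3 * D + 13 / 4) * s ≤ W₀.card) :
    ∃ R : Finset V, (R.card : ℝ) ≤ s ∧ ∀ X : Finset (V × Fin t), (∀ q ∈ X, q.1 ∉ R) →
      (X.card : ℝ) ≤ 2 * s → (D * X.card : ℝ) ≤ (famNbhd 𝒢 X ∩ (W₀ \ R)).card := by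
  set 𝒳 := univ.filter fun X : Finset (V × Fin t) => (X.card : ℝ) ≤ s ∧
    ((famNbhd 𝒢 X ∩ (W₀ \ X.image Prod.fst)).card : ℝ) ≤ D * X.card
  have hempty : ∅ ∈ 𝒳 := by simp [𝒳, hs0, famNbhd_empty]
  obtain ⟨Xa, hXa, hmax⟩ := exists_max_image 𝒳 card ⟨∅, hempty⟩
  obtain ⟨hXa_card, hXa_nbhd⟩ := (mem_filter.1 hXa).2
  refine ⟨Xa.image Prod.fst, le_trans (by exact_mod_cast card_image_le) hXa_card,
    fun X hXR hX => ?_⟩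
  by_contra! hbad
  have hdisj : Disjoint Xa X :=
    disjoint_right.2 fun q hq hqa => hXR q hq (mem_image_of_mem _ hqa)
  have hne : X.Nonempty := nonempty_iff_ne_empty.2 (by rintro rfl; simp [famNbhd_empty] at hbad)
  have hnbhd := card_famNbhd_union_inter_le hdisj hXa_nbhd hbad.le
  have hunion : Xa ∪ X ∈ 𝒳 := by
    refine mem_filter.2 ⟨mem_univ _, ?_, hnbhd⟩
    refine card_le_of_card_famNbhd_inter_le hjum hp hs hW₀ ?_ hnbhd
    rw [card_union_of_disjoint hdisj]
    push_cast
    linarith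
  have := hmax _ hunion
  rw [card_union_of_disjoint hdisj] at this
  have := hne.card_pos
  omega

end Removal

lemma Set.InjOn.exists_extend {ι α : Type*} {f : ι → α} {S : Finset ι} (hf : Set.InjOn f S)
    {L : Finset ι} (hSL : Disjoint S L) {P : ι → Finset α}
    (hP : ∀ i ∈ L, L.card ≤ (P i \ S.image f).card) :
    ∃ g : ι → α, (∀ i ∈ S, g i = f i) ∧ Set.InjOn g ↑(S ∪ L) ∧ ∀ i ∈ L, g i ∈ P i := by
  induction L using Finset.induction_on with
  | empty => exact ⟨f, fun _ _ => rfl, by simpa using hf, by simp⟩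
  | insert ℓ L hℓ ih =>
    rw [Finset.disjoint_insert_right] at hSL
    obtain ⟨g, hgS, hginj, hgP⟩ := ih hSL.2 fun i hi =>
      (Finset.card_le_card (Finset.subset_insert ℓ L)).trans (hP i (Finset.mem_insert_of_mem hi))
    have himage : (S ∪ L).image g = S.image f ∪ L.image g := by
      rw [Finset.image_union, Finset.image_congr fun i hi => hgS i hi]
    obtain ⟨v, hv⟩ : ((P ℓ \ S.image f) \ L.image g).Nonempty := by
      have h₁ := hP ℓ (mem_insert_self ℓ L)
      rw [card_insert_of_notMem hℓ] at h₁
      have h₂ := le_card_sdiff (L.image g) (P ℓ \ S.image f)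
      have h₃ : (L.image g).card ≤ L.card := card_image_le
      rw [← card_pos]
      omega
    have hvg : v ∉ g '' ↑(S ∪ L) := by
      rw [← coe_image, himage, mem_coe, Finset.mem_union, not_or]
      exact ⟨(Finset.mem_sdiff.1 (Finset.mem_sdiff.1 hv).1).2, (Finset.mem_sdiff.1 hv).2⟩
    have hℓSL : ℓ ∉ S ∪ L := by simp [hSL.1, hℓ]
    have hagree : Set.EqOn g (Function.update g ℓ v) ↑(S ∪ L) := fun i hi =>
      (Function.update_of_ne (by rintro rfl; exact hℓSL hi) v g).symm
    refine ⟨Function.update g ℓ v, fun i hi => ?_, ?_, fun i hi => ?_⟩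
    · rw [← hgS i hi]
      exact (hagree (mem_coe.2 (Finset.mem_union_left L hi))).symm
    · rw [Finset.union_insert, coe_insert, Set.injOn_insert (mem_coe.not.2 hℓSL),
        Function.update_self, ← hagree.image_eq]
      exact ⟨hginj.congr hagree, hvg⟩
    · rcases Finset.mem_insert.1 hi with rfl | hi
      · rw [Function.update_self]
        exact (Finset.mem_sdiff.1 (Finset.mem_sdiff.1 hv).1).1
      · rw [← hagree (mem_coe.2 (Finset.mem_union_right S hi))]
        exact hgP i hi

section Embedding

variable {V A : Type*} {t : ℕ} {𝒢 : Fin t → SimpleGraph V} {ℱ : ColoredRootedGraph A t}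

def IsPartialEmbedding (𝒢 : Fin t → SimpleGraph V) (ℱ : ColoredRootedGraph A t) (U : Finset V)
    (S : Finset A) (φ : A → V) : Prop :=
  Set.InjOn φ S ∧ (∀ a ∈ S, φ a ∈ U) ∧ ∀ a ∈ S, ℱ.isRoot a = false →
    ℱ.parent a ∈ S ∧ (𝒢 (ℱ.parentColor a)).Adj (φ a) (φ (ℱ.parent a))

lemma IsPartialEmbedding.union {U : Finset V} {S L : Finset A} {φ φ' : A → V}
    (hφ : IsPartialEmbedding 𝒢 ℱ U S φ) (hagree : ∀ a ∈ S, φ' a = φ a)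
    (hinj : Set.InjOn φ' ↑(S ∪ L)) (hU : ∀ a ∈ L, φ' a ∈ U)
    (hL : ∀ a ∈ L, ℱ.isRoot a = false →
      ℱ.parent a ∈ S ∪ L ∧ (𝒢 (ℱ.parentColor a)).Adj (φ' a) (φ' (ℱ.parent a))) :
    IsPartialEmbedding 𝒢 ℱ U (S ∪ L) φ' := by
  obtain ⟨-, hφU, hφpar⟩ := hφ
  refine ⟨hinj, fun a ha => ?_, fun a ha hleaf => ?_⟩
  · rcases mem_union.1 ha with ha | ha
    · exact hagree a ha ▸ hφU a ha
    · exact hU a ha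
  · rcases mem_union.1 ha with ha | ha
    · obtain ⟨hpS, hadj⟩ := hφpar a ha hleaf
      rw [hagree a ha, hagree _ hpS]
      exact ⟨mem_union_left L hpS, hadj⟩
    · exact hL a ha hleaf

lemma IsPartialEmbedding.exists_extend_root {U : Finset V} {S : Finset A} {φ : A → V}
    (hφ : IsPartialEmbedding 𝒢 ℱ U S φ) {b : A} (hb : ℱ.isRoot b = true) (hbS : b ∉ S)
    {u : V} (hu : u ∈ U \ S.image φ) :
    ∃ φ', IsPartialEmbedding 𝒢 ℱ U (S ∪ {b}) φ' ∧ φ' b = u ∧ ∀ a ∈ S, φ' a = φ a := by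
  obtain ⟨φ', hagree, hinj, hφ'b⟩ := hφ.1.exists_extend (disjoint_singleton_right.2 hbS)
    (P := fun _ => {u}) fun _ _ => by
      rw [sdiff_eq_self_of_disjoint (disjoint_singleton_left.2 (mem_sdiff.1 hu).2)]
      simp
  have hφ'u : φ' b = u := mem_singleton.1 (hφ'b b (mem_singleton_self b))
  refine ⟨φ', hφ.union hagree hinj (fun a ha => ?_) (fun a ha hleaf => ?_), hφ'u, hagree⟩
  · rw [mem_singleton.1 ha, hφ'u]
    exact (mem_sdiff.1 hu).1
  · simp [mem_singleton.1 ha, hb] at hleaf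

lemma IsPartialEmbedding.exists_extend_leaves [Fintype A] {U : Finset V} {S : Finset A}
    {φ : A → V} (hφ : IsPartialEmbedding 𝒢 ℱ U S φ) {b : A} (hbS : b ∈ S)
    (hSL : Disjoint S (ℱ.leavesOf b))
    (hroom : ∀ c, (ℱ.leavesOf b).card ≤ ((U \ S.image φ).filter ((𝒢 c).Adj (φ b))).card) :
    ∃ φ', IsPartialEmbedding 𝒢 ℱ U (S ∪ ℱ.leavesOf b) φ' := by
  set P : A → Finset V := fun ℓ => (U \ S.image φ).filter ((𝒢 (ℱ.parentColor ℓ)).Adj (φ b))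
  obtain ⟨φ', hagree, hinj, hφ'P⟩ := hφ.1.exists_extend hSL (P := P) fun ℓ _ => by
    rw [sdiff_eq_self_of_disjoint (disjoint_left.2 fun v hv => (mem_sdiff.1 (mem_filter.1 hv).1).2)]
    exact hroom _
  refine ⟨φ', hφ.union hagree hinj (fun a ha => ?_) (fun a ha _ => ?_)⟩
  · exact (mem_sdiff.1 (mem_filter.1 (hφ'P a ha)).1).1
  · obtain ⟨-, rfl⟩ := ColoredRootedGraph.mem_leavesOf.1 ha
    rw [hagree _ hbS]
    exact ⟨mem_union_left _ hbS, (mem_filter.1 (hφ'P a ha)).2.symm⟩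

end Embedding

section Forest

variable {V A : Type*} {t : ℕ} {𝒢 : Fin t → SimpleGraph V} {ℱ : ColoredRootedGraph A t}
  {p β : ℝ}

/-- The root goes to a vertex `u` with more than `|leaves|` free neighbours in every colour; then
each leaf has room in the neighbourhood of `u` in its own colour. -/
lemma IsPartialEmbedding.exists_extend_star [Fintype A] (hjum : ∀ i, IsJumbled (𝒢 i) p β)
    (hp : 0 ≤ p) (hβ : 0 ≤ β) {U : Finset V} {S : Finset A} {φ : A → V}
    (hφ : IsPartialEmbedding 𝒢 ℱ U S φ) {b : A} (hb : ℱ.isRoot b = true) (hbS : b ∉ S)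
    (hroom : √t * β + (ℱ.leavesOf b).card < p * (U.card - S.card)) :
    ∃ φ', IsPartialEmbedding 𝒢 ℱ U (S ∪ {b} ∪ ℱ.leavesOf b) φ' := by
  set Z := U \ S.image φ
  have hZ : (U.card : ℝ) - S.card ≤ Z.card := by
    have h₁ : U.card - (S.image φ).card ≤ Z.card := le_card_sdiff _ _
    have h₂ : (S.image φ).card ≤ S.card := card_image_le
    have := (Nat.cast_le (α := ℝ)).2 (show U.card ≤ Z.card + S.card by omega)
    push_cast at this
    linarith
  obtain ⟨u, huZ, hu⟩ := exists_lt_card_filter_adj hjum hβ Z (ℱ.leavesOf b).card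
    (hroom.trans_le (mul_le_mul_of_nonneg_left hZ hp))
  obtain ⟨φ₁, hφ₁, hφ₁b, hagree⟩ := hφ.exists_extend_root hb hbS huZ
  refine hφ₁.exists_extend_leaves (mem_union_right _ (mem_singleton_self b)) ?_ fun c => ?_
  · refine disjoint_right.2 fun ℓ hℓ hℓS => ?_
    obtain ⟨hleaf, rfl⟩ := ColoredRootedGraph.mem_leavesOf.1 hℓ
    rcases mem_union.1 hℓS with h | h
    · exact hbS (hφ.2.2 ℓ h hleaf).1
    · rw [← mem_singleton.1 h, hleaf] at hb
      exact Bool.false_ne_true hb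
  · have hpool : (U \ (S ∪ {b}).image φ₁).filter ((𝒢 c).Adj (φ₁ b)) = Z.filter ((𝒢 c).Adj u) := by
      rw [image_union, image_congr fun a ha => hagree a ha, image_singleton, hφ₁b]
      ext v
      simp only [Z, mem_filter, mem_sdiff, mem_union, mem_singleton, not_or]
      exact ⟨fun ⟨⟨hvU, hvS, _⟩, hadj⟩ => ⟨⟨hvU, hvS⟩, hadj⟩,
        fun ⟨⟨hvU, hvS⟩, hadj⟩ => ⟨⟨hvU, hvS, (𝒢 c).ne_of_adj hadj.symm⟩, hadj⟩⟩
    rw [hpool]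
    exact (hu c).le

lemma exists_isPartialEmbedding_starsOver [Fintype A] [Nonempty V]
    (hjum : ∀ i, IsJumbled (𝒢 i) p β) (hp : 0 ≤ p) (hβ : 0 ≤ β) {U : Finset V}
    (hroom : ∀ b, √t * β + (ℱ.leavesOf b).card < p * (U.card - Fintype.card A))
    (R : Finset A) (hR : ∀ b ∈ R, ℱ.isRoot b = true) :
    ∃ φ, IsPartialEmbedding 𝒢 ℱ U (ℱ.starsOver R) φ := by
  induction R using Finset.induction_on with
  | empty =>
    exact ⟨fun _ => Classical.arbitrary V,
      by simp [IsPartialEmbedding, ColoredRootedGraph.starsOver]⟩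
  | insert b R hbR ih =>
    obtain ⟨φ, hφ⟩ := ih fun a ha => hR a (mem_insert_of_mem ha)
    have hb := hR b (mem_insert_self b R)
    rw [ColoredRootedGraph.starsOver_insert]
    refine hφ.exists_extend_star hjum hp hβ hb ?_ ((hroom b).trans_le ?_)
    · simp [ColoredRootedGraph.mem_starsOver, hbR, hb]
    · gcongr
      exact card_le_univ _

lemma IsPartialEmbedding.isColEmbedding [Fintype A] {U : Finset V} {φ : A → V}
    (hφ : IsPartialEmbedding 𝒢 ℱ U univ φ)
    (hleaf : ∀ a, ℱ.isRoot a = false → ∑ i, monDegOn ℱ.graph univ a i = 1)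
    (hedge : ∀ i a b, (ℱ.graph i).Adj a b →
      (ℱ.isRoot a = true ∧ ℱ.isRoot b = false) ∨ (ℱ.isRoot a = false ∧ ℱ.isRoot b = true)) :
    IsColEmbedding 𝒢 ℱ.graph φ := by
  have hleafAdj {i a b} (hab : (ℱ.graph i).Adj a b) (ha : ℱ.isRoot a = false) :
      (𝒢 i).Adj (φ a) (φ b) := by
    obtain ⟨rfl, rfl⟩ := ColoredRootedGraph.parent_eq_of_adj hleaf ha hab
    exact (hφ.2.2 a (mem_univ a) ha).2
  refine ⟨Set.injOn_univ.1 (by simpa using hφ.1), fun i a b hab => ?_⟩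
  rcases hedge i a b hab with ⟨-, hb⟩ | ⟨ha, -⟩
  · exact (hleafAdj hab.symm hb).symm
  · exact hleafAdj hab ha

end Forest

section Goodness

variable {V A : Type*} {t : ℕ} {ℱ : ColoredRootedGraph A t}

/-- Each pair `(φ a, colour of the parent edge of a)` of `P_φ` is paid for by that parent edge. -/
lemma card_Pset_inter_le {S : Finset A} (hS : ∀ a ∈ S, ℱ.isRoot a = false → ℱ.parent a ∈ S)
    (φ : A → V) (X : Finset (V × Fin t)) :
    (Pset ℱ S φ ∩ X).card ≤
      ∑ q ∈ X, ∑ a ∈ S.filter (fun a => φ a = q.1), monDegOn ℱ.graph S a q.2 := by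
  set e : A → V × Fin t := fun a => (φ a, ℱ.parentColor a)
  set L := (S.filter fun a => ℱ.isRoot a = false).filter fun a => e a ∈ X
  have hPL : Pset ℱ S φ ∩ X ⊆ L.image e := by
    intro q hq
    obtain ⟨hqP, hqX⟩ := mem_inter.1 hq
    obtain ⟨a, ha, rfl⟩ := mem_image.1 hqP
    exact mem_image_of_mem e (mem_filter.2 ⟨ha, hqX⟩)
  have hdeg : ∀ a ∈ L, 1 ≤ monDegOn ℱ.graph S a (ℱ.parentColor a) := fun a ha => by
    obtain ⟨haS, hleaf⟩ := mem_filter.1 (mem_filter.1 ha).1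
    exact card_pos.2 ⟨ℱ.parent a, mem_filter.2 ⟨hS a haS hleaf, ℱ.parent_adj a hleaf⟩⟩
  calc (Pset ℱ S φ ∩ X).card ≤ L.card := (card_le_card hPL).trans card_image_le
    _ ≤ ∑ a ∈ L, monDegOn ℱ.graph S a (ℱ.parentColor a) := card_eq_sum_ones L ▸ sum_le_sum hdeg
    _ = ∑ q ∈ X, ∑ a ∈ L.filter (fun a => e a = q), monDegOn ℱ.graph S a q.2 := by
      rw [← sum_fiberwise_of_maps_to fun a ha => (mem_filter.1 ha).2]
      exact sum_congr rfl fun q _ => sum_congr rfl fun a ha => by rw [← (mem_filter.1 ha).2]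
    _ ≤ _ := sum_le_sum fun q _ => sum_le_sum_of_subset fun a ha => by
      obtain ⟨haL, rfl⟩ := mem_filter.1 ha
      exact mem_filter.2 ⟨(mem_filter.1 (mem_filter.1 haL).1).1, rfl⟩

lemma Rfun_nonneg [Fintype V] {𝒢 : Fin t → SimpleGraph V} {V' W : Finset V} (hWV' : W ⊆ V')
    {S : Finset A} {φ : A → V} (hφW : ∀ a ∈ S, φ a ∉ W)
    (hS : ∀ a ∈ S, ℱ.isRoot a = false → ℱ.parent a ∈ S) {D : ℕ} {X : Finset (V × Fin t)}
    (hX : D * X.card ≤ (famNbhd 𝒢 X ∩ W).card) : 0 ≤ Rfun 𝒢 V' ℱ S φ D X := by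
  have hW : (famNbhd 𝒢 X ∩ W).card ≤ ((famNbhd 𝒢 X ∩ V') \ S.image φ).card := by
    refine card_le_card fun v hv => ?_
    obtain ⟨hvN, hvW⟩ := mem_inter.1 hv
    refine mem_sdiff.2 ⟨mem_inter.2 ⟨hvN, hWV' hvW⟩, fun hvφ => ?_⟩
    obtain ⟨a, ha, rfl⟩ := mem_image.1 hvφ
    exact hφW a ha hvW
  have hP := card_Pset_inter_le hS φ X
  unfold Rfun
  rw [sum_sub_distrib, sum_const, nsmul_eq_mul]
  have hW' : ((famNbhd 𝒢 X ∩ W).card : ℤ) ≤ ((famNbhd 𝒢 X ∩ V') \ S.image φ).card := by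
    exact_mod_cast hW
  have hX' : (D : ℤ) * X.card ≤ (famNbhd 𝒢 X ∩ W).card := by exact_mod_cast hX
  have hP' : ((Pset ℱ S φ ∩ X).card : ℤ) ≤
      ∑ q ∈ X, ∑ a ∈ S.filter (fun a => φ a = q.1), (monDegOn ℱ.graph S a q.2 : ℤ) := by
    exact_mod_cast hP
  linarith

end Goodness

lemma exists_good_embedding {V A : Type*} [Fintype V] [Fintype A] {t : ℕ}
    {𝒢 : Fin t → SimpleGraph V} {ℱ : ColoredRootedGraph A t} {p β s : ℝ} {D Δ : ℕ}
    (hjum : ∀ i, IsJumbled (𝒢 i) p β) (hp : 0 ≤ p) (hβ : 0 ≤ β)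
    (hleaf : ∀ a, ℱ.isRoot a = false → ∑ i, monDegOn ℱ.graph univ a i = 1)
    (hedge : ∀ i a b, (ℱ.graph i).Adj a b →
      (ℱ.isRoot a = true ∧ ℱ.isRoot b = false) ∨ (ℱ.isRoot a = false ∧ ℱ.isRoot b = true))
    (hΔF : ∀ a, ∑ i, monDegOn ℱ.graph univ a i ≤ Δ) {R W₀ : Finset V}
    (hexp : ∀ X : Finset (V × Fin t), (∀ q ∈ X, q.1 ∉ R) →
      (X.card : ℝ) ≤ s → (D * X.card : ℝ) ≤ (famNbhd 𝒢 X ∩ (W₀ \ R)).card)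
    (hroom : √t * β + Δ < p * ((R ∪ W₀)ᶜ.card - Fintype.card A)) :
    ∃ φ : A → V, IsColEmbedding 𝒢 ℱ.graph φ ∧ (∀ a, φ a ∈ Rᶜ) ∧ IsGood 𝒢 Rᶜ ℱ univ φ s D := by
  obtain ⟨v, -⟩ : (R ∪ W₀)ᶜ.Nonempty := by
    rw [← card_pos]
    by_contra! h0
    rw [Nat.le_zero.1 h0, Nat.cast_zero, zero_sub] at hroom
    nlinarith [Real.sqrt_nonneg t, (Nat.cast_nonneg Δ : (0 : ℝ) ≤ Δ),
      (Nat.cast_nonneg (Fintype.card A) : (0 : ℝ) ≤ Fintype.card A)]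
  have : Nonempty V := ⟨v⟩
  obtain ⟨φ, hφ⟩ := exists_isPartialEmbedding_starsOver (U := (R ∪ W₀)ᶜ) hjum hp hβ
    (fun b => hroom.trans_le' (by
      gcongr
      exact_mod_cast (ℱ.card_leavesOf_le b).trans (hΔF b)))
    (univ.filter fun b => ℱ.isRoot b = true) (fun b hb => (mem_filter.1 hb).2)
  rw [ColoredRootedGraph.starsOver_roots fun a => ColoredRootedGraph.isRoot_parent hedge] at hφ
  have hφR (a : A) : φ a ∉ R ∪ W₀ := mem_compl.1 (hφ.2.1 a (mem_univ a))
  refine ⟨φ, hφ.isColEmbedding hleaf hedge, fun a => ?_, fun X hXR hX => ?_⟩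
  · exact mem_compl.2 fun h => hφR a (mem_union_left W₀ h)
  · refine Rfun_nonneg (fun v hv => mem_compl.2 (mem_sdiff.1 hv).2)
      (fun a _ h => hφR a (mem_union_right R (mem_sdiff.1 h).1)) (fun _ _ _ => mem_univ _) ?_
    exact_mod_cast hexp X (fun q hq => mem_compl.1 (hXR q hq)) hX

theorem embed_star_forest_general {V A : Type*} [Fintype V] [Fintype A] {t : ℕ}
    (ht : 1 ≤ t) (c p β : ℝ) (D Δ : ℕ)
    (hc1 : c < 1) (hD : 3 ≤ D)
    (hp0 : 0 < p) (hp1 : p < 1) (hβ : 1 ≤ β)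
    (𝒢 : Fin t → SimpleGraph V) (hjum : ∀ i, IsJumbled (𝒢 i) p β)
    (hΔV : (Δ : ℝ) ≤ (1 - c) * p * (Fintype.card V : ℝ))
    (s : ℝ) (hsdef : s = 2 * Real.sqrt t * β / p)
    (ℱ : ColoredRootedGraph A t)
    -- ℱ is a star forest: each non-root (leaf) has total degree 1, and every edge
    -- joins a root (star centre) to a non-root (leaf)
    (hleaf : ∀ a, ℱ.isRoot a = false → ∑ i, monDegOn ℱ.graph Finset.univ a i = 1)
    (hedge : ∀ i a b, (ℱ.graph i).Adj a b →
      (ℱ.isRoot a = true ∧ ℱ.isRoot b = false) ∨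
      (ℱ.isRoot a = false ∧ ℱ.isRoot b = true))
    (hΔF : ∀ a, ∑ i, monDegOn ℱ.graph Finset.univ a i ≤ Δ)
    (hcard : (Fintype.card A : ℝ) + 5 * s * D < c * (Fintype.card V : ℝ) / 2) :
    ∃ V' : Finset V, (Fintype.card V : ℝ) - s ≤ V'.card ∧
      ∃ φ : A → V, IsColEmbedding 𝒢 ℱ.graph φ ∧ (∀ a, φ a ∈ V') ∧
        IsGood 𝒢 V' ℱ Finset.univ φ (2 * s) D := by
  have hsp : √t * β = p * s / 2 := by
    rw [hsdef]
    field_simp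
  have hs2 : 2 ≤ s := by
    have : 1 ≤ √t := Real.one_le_sqrt.2 (by exact_mod_cast ht)
    rw [hsdef, le_div_iff₀ hp0]
    nlinarith
  have hD3 : (3 : ℝ) ≤ D := by exact_mod_cast hD
  have hw := Nat.ceil_lt_add_one (show 0 ≤ (3 * D + 13 / 4) * s by positivity)
  obtain ⟨W₀, -, hW₀⟩ := exists_subset_card_eq (s := (univ : Finset V))
    (n := ⌈(3 * (D : ℝ) + 13 / 4) * s⌉₊) (by
      rw [card_univ, ← Nat.cast_le (α := ℝ)]
      nlinarith)
  rw [← hW₀] at hw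
  obtain ⟨R, hR, hexp⟩ := exists_expanding_removal hjum hp0 (by linarith)
    (by rw [← hsp, mul_pow, Real.sq_sqrt (Nat.cast_nonneg t)]) W₀ (hW₀ ▸ Nat.le_ceil _)
  have hRc := card_compl_add_card R
  have hU := (card_compl_add_card (R ∪ W₀)).symm.le.trans
    (Nat.add_le_add_left (card_union_le R W₀) _)
  refine ⟨Rᶜ, ?_, exists_good_embedding hjum hp0.le (zero_le_one.trans hβ) hleaf hedge hΔF hexp ?_⟩
  · rw [← hRc]
    push_cast
    linarith
  · have hU' := (Nat.cast_le (α := ℝ)).2 hU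
    push_cast at hU'
    have hroom : (1 - c) * Fintype.card V + s / 2 < (R ∪ W₀)ᶜ.card - Fintype.card A := by
      nlinarith
    calc √t * β + Δ ≤ p * ((1 - c) * Fintype.card V + s / 2) := by
          rw [hsp]
          linarith
      _ < _ := mul_lt_mul_of_pos_left hroom hp0

/-- Embedding a coloured star forest into a jumbled family: with
`s = 2√t β/p`, any `[t]`-edge-coloured star forest `ℱ` (roots the star centres)
with `Δ(ℱ) ≤ Δ ≤ (1−c)p|V|` and `|V(ℱ)| + 5sD < c|V|/2` has a `(2s,D)`-good
embedding into `𝒢` restricted to some `V'` with `|V'| ≥ |V| − s`. -/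
theorem embed_star_forest {V A : Type*} [Fintype V] [Fintype A] {t : ℕ}
    (ht : 1 ≤ t) (c p β : ℝ) (D Δ : ℕ)
    (hc0 : 0 < c) (hc1 : c < 1) (hD : 3 ≤ D)
    (hp0 : 0 < p) (hp1 : p < 1) (hβ : 1 ≤ β)
    (𝒢 : Fin t → SimpleGraph V) (hjum : ∀ i, IsJumbled (𝒢 i) p β)
    (hΔpos : 1 ≤ Δ) (hΔV : (Δ : ℝ) ≤ (1 - c) * p * (Fintype.card V : ℝ))
    (s : ℝ) (hsdef : s = 2 * Real.sqrt t * β / p)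
    (ℱ : ColoredRootedGraph A t)
    (hdisj : ∀ i j, i ≠ j → Disjoint (ℱ.graph i).edgeSet (ℱ.graph j).edgeSet)
    -- ℱ is a star forest: each non-root (leaf) has total degree 1, and every edge
    -- joins a root (star centre) to a non-root (leaf)
    (hleaf : ∀ a, ℱ.isRoot a = false → ∑ i, monDegOn ℱ.graph Finset.univ a i = 1)
    (hedge : ∀ i a b, (ℱ.graph i).Adj a b →
      (ℱ.isRoot a = true ∧ ℱ.isRoot b = false) ∨
      (ℱ.isRoot a = false ∧ ℱ.isRoot b = true))
    (hΔF : ∀ a, ∑ i, monDegOn ℱ.graph Finset.univ a i ≤ Δ)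
    (hcard : (Fintype.card A : ℝ) + 5 * s * D < c * (Fintype.card V : ℝ) / 2) :
    ∃ V' : Finset V, (Fintype.card V : ℝ) - s ≤ V'.card ∧
      ∃ φ : A → V, IsColEmbedding 𝒢 ℱ.graph φ ∧ (∀ a, φ a ∈ V') ∧
        IsGood 𝒢 V' ℱ Finset.univ φ (2 * s) D :=
  embed_star_forest_general ht c p β D Δ hc1 hD hp0 hp1 hβ 𝒢 hjum hΔV s hsdef ℱ hleaf hedge hΔF
    hcard
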